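/- arXiv:2205.01200 — 3 statements merged into one kernel-verified Lean document; each statement's English description precedes it below -/
import Mathlib

section
/- A generator enriched lattice (L,G) has no parallels if and only if the lattice L is graded with rank function rk(ℓ) = |{g ∈ G : g ≤ ℓ}|. -/
open Finset

/-- A generator-enriched lattice datum inside an ambient lattice `L`:
a minimal element `z` together with a finite generating set of elements
strictly above `z`. The underlying set of elements consists of all joins
of `z` with subsets of the generating set. -/
structure GEL (L : Type*) [Lattice L] [DecidableEq L] where
  z : L
  gens : Finset L
  lt_gens : ∀ g ∈ gens, z < g

namespace GEL

variable {L K : Type*} [Lattice L] [OrderBot L] [DecidableEq L]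

/-- The underlying set of elements of a generator enriched lattice. -/
def carrier (M : GEL L) : Finset L :=
  M.gens.powerset.image fun X => X.sup id ⊔ M.z

/-- Deletion of a set of generators. -/
def delete (M : GEL L) (I : Finset L) : GEL L :=
  ⟨M.z, M.gens \ I, fun g hg => M.lt_gens g (Finset.mem_sdiff.mp hg).1⟩

/-- Restriction to a set of generators. -/
def restrict (M : GEL L) (I : Finset L) : GEL L :=
  M.delete (M.gens \ I)

/-- Contraction by a set of generators. -/
def contract (M : GEL L) (I : Finset L) : GEL L :=
  ⟨I.sup id ⊔ M.z,
   (M.gens.image fun g => g ⊔ (I.sup id ⊔ M.z)).erase (I.sup id ⊔ M.z),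
   fun g hg => by
     obtain ⟨hne, hg'⟩ := Finset.mem_erase.mp hg
     obtain ⟨h, -, rfl⟩ := Finset.mem_image.mp hg'
     exact lt_of_le_of_ne le_sup_right (Ne.symm hne)⟩

open Classical in
/-- Contraction by an element: contract by all generators below it. -/
noncomputable def contractEl (M : GEL L) (ℓ : L) : GEL L :=
  M.contract (M.gens.filter fun g => g ≤ ℓ)

/-- A single deletion or contraction step. -/
def Step (M N : GEL L) : Prop :=
  ∃ I ⊆ M.gens, N = M.delete I ∨ N = M.contract I

/-- `Minor M N` : `N` is a minor of `M`, i.e. obtained from `M` by a finite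
sequence of deletions and contractions. -/
def Minor (M N : GEL L) : Prop :=
  Relation.ReflTransGen Step M N

/-- The generator enriched lattice on a lattice with `⊥`, with the given generating set. -/
def ofGens (G : Finset L) (hG : ∀ g ∈ G, (⊥ : L) < g) : GEL L :=
  ⟨⊥, G, hG⟩

/-- The underlying type of the minor poset of `T`: all minors of `T`
together with an adjoined minimum `none`. -/
abbrev MP (T : GEL L) := Option {M : GEL L // T.Minor M}

/-- The order relation of the minor poset. -/
def mple (T : GEL L) : MP T → MP T → Prop
  | none, _ => True
  | some _, none => False
  | some A, some B => B.1.Minor A.1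

/-- The rank function of the minor poset. -/
def mrank (T : GEL L) : MP T → ℕ
  | none => 0
  | some A => A.1.gens.card + 1

/-- A parallel: an element `ℓ` and distinct generators `g, h` with
`g ⊔ ℓ = h ⊔ ℓ ≠ ℓ`. -/
def HasParallel (M : GEL L) : Prop :=
  ∃ ℓ ∈ M.carrier, ∃ g ∈ M.gens, ∃ h ∈ M.gens,
    g ≠ h ∧ g ⊔ ℓ = h ⊔ ℓ ∧ g ⊔ ℓ ≠ ℓ

/-- Isomorphism of generator enriched lattices: a join-preserving bijection of the
underlying sets carrying the generating set onto the generating set. -/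
def GIso [Lattice K] [OrderBot K] [DecidableEq K] (M : GEL L) (N : GEL K) : Prop :=
  ∃ f : L → K, Set.BijOn f ↑M.carrier ↑N.carrier ∧
    (∀ a ∈ M.carrier, ∀ b ∈ M.carrier, f (a ⊔ b) = f a ⊔ f b) ∧
    f '' ↑M.gens = ↑N.gens

open Classical in
/-- The image generator enriched lattice `⟨f(I) | f(z)⟩` of a strong map. -/
noncomputable def map [Lattice K] [DecidableEq K] (f : L → K) (M : GEL L) : GEL K :=
  ⟨f M.z, (M.gens.image f).filter fun y => f M.z < y,
   fun g hg => (Finset.mem_filter.mp hg).2⟩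

/-- `T` lifts join irreducibles: for every `ℓ` and generator `g` with `g ≰ ℓ`,
the element `g ⊔ ℓ` is join irreducible in the interval `[ℓ, ⊤]`. -/
def LiftsJI (T : GEL L) : Prop :=
  ∀ ℓ : L, ∀ g ∈ T.gens, ¬ g ≤ ℓ →
    ∀ a b : L, ℓ ≤ a → ℓ ≤ b → g ⊔ ℓ = a ⊔ b → g ⊔ ℓ = a ∨ g ⊔ ℓ = b

end GEL

/-- `(L,G)` has no parallels iff `L` is graded with rank function
`rk ℓ = |{g ∈ G : g ≤ ℓ}|`, i.e. this function is `0` at `⊥` and increases by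
exactly one along cover relations. -/
theorem noParallels_iff_graded {L : Type*} [Lattice L] [OrderBot L]
    [DecidableEq L] [DecidableRel ((· ≤ ·) : L → L → Prop)]
    (T : GEL L) (hcar : ∀ ℓ : L, ℓ ∈ T.carrier) :
    ¬ T.HasParallel ↔
      ((T.gens.filter fun g => g ≤ (⊥ : L)).card = 0 ∧
        ∀ a b : L, a ⋖ b →
          (T.gens.filter fun g => g ≤ b).card
            = (T.gens.filter fun g => g ≤ a).card + 1) := by
  classical
  -- The minimum `z` is `⊥`.
  have hz : T.z = ⊥ := by
    have := hcar ⊥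
    simp only [GEL.carrier, mem_image, mem_powerset] at this
    obtain ⟨X, -, hX⟩ := this
    exact le_bot_iff.mp (hX ▸ le_sup_right)
  have hgens_bot : ∀ g ∈ T.gens, (⊥ : L) < g := fun g hg => hz ▸ T.lt_gens g hg
  -- Every element is the join of the generators below it.
  have hgen : ∀ ℓ : L, (T.gens.filter fun g => g ≤ ℓ).sup id ⊔ T.z = ℓ := by
    intro ℓ
    obtain ⟨X, hXg, hX⟩ : ∃ X ⊆ T.gens, X.sup id ⊔ T.z = ℓ := by
      have := hcar ℓ
      simpa only [GEL.carrier, mem_image, mem_powerset] using this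
    apply le_antisymm
    · apply sup_le
      · exact Finset.sup_le fun g hg => (mem_filter.mp hg).2
      · rw [hz]; exact bot_le
    · conv_lhs => rw [← hX]
      apply sup_le_sup_right
      apply Finset.sup_le fun g hg => ?_
      have hgl : g ≤ ℓ := by
        rw [← hX]; exact le_trans (le_sup (f := id) hg) le_sup_left
      exact le_sup (f := id) (mem_filter.mpr ⟨hXg hg, hgl⟩)
  have hbot : (T.gens.filter fun g => g ≤ (⊥ : L)).card = 0 := by
    rw [Finset.card_eq_zero, Finset.filter_eq_empty_iff]
    exact fun g hg hle => (hgens_bot g hg).not_ge hle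
  haveI : Fintype L := Fintype.ofSurjective (fun x : T.carrier => (x : L))
    (fun ℓ => ⟨⟨ℓ, hcar ℓ⟩, rfl⟩)
  haveI : WellFoundedLT L := Finite.to_wellFoundedLT
  constructor
  · -- no parallels → graded
    intro hnp
    refine ⟨hbot, fun a b hab => ?_⟩
    have hsub : (T.gens.filter fun g => g ≤ a) ⊆ T.gens.filter fun g => g ≤ b :=
      Finset.monotone_filter_right _ fun g _ hg => le_trans hg hab.le
    have hdn : ((T.gens.filter fun g => g ≤ b) \ T.gens.filter fun g => g ≤ a).Nonempty := by
      rw [Finset.sdiff_nonempty]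
      intro hba
      have hst : (T.gens.filter fun g => g ≤ a) = T.gens.filter fun g => g ≤ b :=
        Finset.Subset.antisymm hsub hba
      have : a = b := by
        conv_lhs => rw [← hgen a]
        conv_rhs => rw [← hgen b]
        rw [hst]
      exact hab.ne this
    have hd1 : ((T.gens.filter fun g => g ≤ b) \ T.gens.filter fun g => g ≤ a).card ≤ 1 := by
      by_contra hgt
      obtain ⟨g, hgm, h, hhm, gneh⟩ := Finset.one_lt_card.mp (lt_of_not_ge hgt)
      obtain ⟨hgb', hga'⟩ := Finset.mem_sdiff.mp hgm
      obtain ⟨hhb', hha'⟩ := Finset.mem_sdiff.mp hhm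
      obtain ⟨hgG, hgb⟩ := mem_filter.mp hgb'
      obtain ⟨hhG, hhb⟩ := mem_filter.mp hhb'
      have hga : ¬ g ≤ a := fun hle => hga' (mem_filter.mpr ⟨hgG, hle⟩)
      have hha : ¬ h ≤ a := fun hle => hha' (mem_filter.mpr ⟨hhG, hle⟩)
      have hgab : g ⊔ a = b := by
        have hlt : a < g ⊔ a := lt_of_le_of_ne le_sup_right
          (fun he => hga (sup_eq_right.mp he.symm))
        have hle : g ⊔ a ≤ b := sup_le hgb hab.le
        by_contra hne2
        exact hab.2 hlt (lt_of_le_of_ne hle hne2)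
      have hhab : h ⊔ a = b := by
        have hlt : a < h ⊔ a := lt_of_le_of_ne le_sup_right
          (fun he => hha (sup_eq_right.mp he.symm))
        have hle : h ⊔ a ≤ b := sup_le hhb hab.le
        by_contra hne2
        exact hab.2 hlt (lt_of_le_of_ne hle hne2)
      exact hnp ⟨a, hcar a, g, hgG, h, hhG, gneh, by rw [hgab, hhab],
        fun he => hga (he ▸ le_sup_left)⟩
    have := Finset.card_sdiff_add_card_eq_card hsub
    have hd := Finset.card_pos.mpr hdn
    omega
  · -- graded → no parallels
    rintro ⟨-, hcov⟩ hpar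
    have key : ∀ ℓ : L, ∀ g ∈ T.gens, ∀ h ∈ T.gens, g ≠ h → g ⊔ ℓ = h ⊔ ℓ →
        g ⊔ ℓ ≠ ℓ → False := by
      intro ℓ
      induction ℓ using WellFoundedGT.induction with
      | _ ℓ IH =>
      intro g hg h hh gneh heq hne
      have hglℓ : ¬ g ≤ ℓ := fun hle => hne (sup_eq_right.mpr hle)
      have hhlℓ : ¬ h ≤ ℓ := fun hle => (heq ▸ hne) (sup_eq_right.mpr hle)
      have hlt : ℓ < g ⊔ ℓ := lt_of_le_of_ne le_sup_right (Ne.symm hne)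
      obtain ⟨c, hcc, hcle⟩ := exists_covBy_le_of_lt hlt
      have hcard := hcov ℓ c hcc
      have hsub : (T.gens.filter fun x => x ≤ ℓ) ⊆ T.gens.filter fun x => x ≤ c :=
        Finset.monotone_filter_right _ fun x _ hx => le_trans hx hcc.le
      have hd1 : ((T.gens.filter fun x => x ≤ c) \ T.gens.filter fun x => x ≤ ℓ).card = 1 := by
        have := Finset.card_sdiff_add_card_eq_card hsub
        omega
      by_cases hgc : g ≤ c
      · have hceq : c = g ⊔ ℓ := le_antisymm hcle (sup_le hgc hcc.le)
        have hhc : h ≤ c := by rw [hceq, heq]; exact le_sup_left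
        have hgm : g ∈ (T.gens.filter fun x => x ≤ c) \ T.gens.filter fun x => x ≤ ℓ :=
          Finset.mem_sdiff.mpr ⟨mem_filter.mpr ⟨hg, hgc⟩,
            fun hmem => hglℓ (mem_filter.mp hmem).2⟩
        have hhm : h ∈ (T.gens.filter fun x => x ≤ c) \ T.gens.filter fun x => x ≤ ℓ :=
          Finset.mem_sdiff.mpr ⟨mem_filter.mpr ⟨hh, hhc⟩,
            fun hmem => hhlℓ (mem_filter.mp hmem).2⟩
        exact gneh (Finset.card_le_one.mp hd1.le g hgm h hhm)
      · have hhc : ¬ h ≤ c := by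
          intro hhc
          have hceq : c = g ⊔ ℓ := le_antisymm hcle (heq ▸ sup_le hhc hcc.le)
          exact hgc (hceq ▸ le_sup_left)
        have h1 : g ⊔ c = g ⊔ ℓ :=
          le_antisymm (sup_le le_sup_left hcle) (sup_le le_sup_left (le_trans hcc.le le_sup_right))
        have h2 : h ⊔ c = g ⊔ ℓ := by
          apply le_antisymm (sup_le (heq ▸ le_sup_left) hcle)
          rw [heq]
          exact sup_le le_sup_left (le_trans hcc.le le_sup_right)
        exact IH c hcc.lt g hg h hh gneh (h1.trans h2.symm)
          (fun hec => hgc (hec ▸ le_sup_left))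
    obtain ⟨ℓ, -, g, hg, h, hh, gneh, heq, hne⟩ := hpar
    exact key ℓ g hg h hh gneh heq hne
end

section
/- For any generator enriched lattice (L,G), the set of minors decomposes as a disjoint union over ℓ ∈ L of the subposets M(L,G,ℓ) of minors with minimal element ℓ; moreover each M(L,G,ℓ) equals the interval [(ℓ,∅), (L,G)/ℓ] of the minor poset and is isomorphic to a Boolean algebra of rank |{g∨ℓ : g ∈ G} \ {ℓ}|. -/
open Finset

namespace GEL

variable {L : Type*} [Lattice L] [OrderBot L] [DecidableEq L]

lemma ext' {M N : GEL L} (h1 : M.z = N.z) (h2 : M.gens = N.gens) : M = N := by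
  cases M; cases N; simp_all

/-- Structural characterization of minors. -/
lemma minor_iff (T M : GEL L) :
    T.Minor M ↔ (∃ X ⊆ T.gens, X.sup id ⊔ T.z = M.z) ∧
      M.gens ⊆ (T.gens.image fun g => g ⊔ M.z).erase M.z := by
  classical
  constructor
  · intro h
    induction h with
    | refl =>
      refine ⟨⟨∅, Finset.empty_subset _, by simp⟩, ?_⟩
      intro g hg
      have hlt := T.lt_gens g hg
      exact Finset.mem_erase.mpr ⟨hlt.ne',
        Finset.mem_image.mpr ⟨g, hg, sup_eq_left.mpr hlt.le⟩⟩
    | @tail M' N _ hstep ih =>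
      obtain ⟨⟨X, hX, hXz⟩, hsub⟩ := ih
      obtain ⟨I, hI, hN⟩ := hstep
      rcases hN with rfl | rfl
      · exact ⟨⟨X, hX, hXz⟩, fun h hh => hsub (Finset.mem_sdiff.mp hh).1⟩
      · have hzle : M'.z ≤ I.sup id ⊔ M'.z := le_sup_right
        constructor
        · refine ⟨X ∪ T.gens.filter (fun g => g ⊔ M'.z ∈ I),
            Finset.union_subset hX (Finset.filter_subset _ _), ?_⟩
          show (X ∪ T.gens.filter (fun g => g ⊔ M'.z ∈ I)).sup id ⊔ T.z
              = I.sup id ⊔ M'.z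
          rw [Finset.sup_union]
          have hXle : X.sup id ⊔ T.z ≤ I.sup id ⊔ M'.z := by
            rw [hXz]; exact le_sup_right
          apply le_antisymm
          · refine sup_le (sup_le ?_ ?_) ?_
            · exact le_trans (le_trans le_sup_left (le_of_eq hXz)) le_sup_right
            · refine le_trans (Finset.sup_le fun g hg => ?_) le_sup_left
              have hgI := (Finset.mem_filter.mp hg).2
              exact le_trans le_sup_left (Finset.le_sup (f := id) hgI)
            · exact le_trans (le_trans le_sup_right (le_of_eq hXz)) le_sup_right
          · have hMle : M'.z ≤ (X.sup id ⊔
                (T.gens.filter (fun g => g ⊔ M'.z ∈ I)).sup id) ⊔ T.z := by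
              rw [← hXz]
              exact sup_le_sup_right le_sup_left T.z
            refine sup_le (Finset.sup_le fun i hi => ?_) hMle
            have hiE := hsub (hI hi)
            obtain ⟨hne, hi'⟩ := Finset.mem_erase.mp hiE
            obtain ⟨g, hg, rfl⟩ := Finset.mem_image.mp hi'
            have hgF : g ∈ T.gens.filter (fun g => g ⊔ M'.z ∈ I) :=
              Finset.mem_filter.mpr ⟨hg, hi⟩
            have hg1 : g ≤ (T.gens.filter (fun g => g ⊔ M'.z ∈ I)).sup id :=
              Finset.le_sup (f := id) hgF
            exact sup_le
              (le_trans hg1 (le_trans le_sup_right le_sup_left)) hMle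
        · intro h hh
          have hh' : h ∈ ((M'.gens.image fun g => g ⊔ (I.sup id ⊔ M'.z)).erase
              (I.sup id ⊔ M'.z)) := hh
          obtain ⟨hne, hh''⟩ := Finset.mem_erase.mp hh'
          obtain ⟨m, hm, rfl⟩ := Finset.mem_image.mp hh''
          have hmE := hsub hm
          obtain ⟨hmne, hm'⟩ := Finset.mem_erase.mp hmE
          obtain ⟨g, hg, rfl⟩ := Finset.mem_image.mp hm'
          have hkey : (g ⊔ M'.z) ⊔ (I.sup id ⊔ M'.z) = g ⊔ (I.sup id ⊔ M'.z) := by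
            rw [sup_assoc, sup_eq_right.mpr hzle]
          refine Finset.mem_erase.mpr ⟨hne, Finset.mem_image.mpr ⟨g, hg, ?_⟩⟩
          exact hkey.symm
  · rintro ⟨⟨X, hX, hXz⟩, hsub⟩
    have hsub' : M.gens ⊆ (T.contract X).gens := by
      show M.gens ⊆ (T.gens.image fun g => g ⊔ (X.sup id ⊔ T.z)).erase
        (X.sup id ⊔ T.z)
      rw [hXz]; exact hsub
    have hM : M = (T.contract X).delete ((T.contract X).gens \ M.gens) := by
      apply ext'
      · exact hXz.symm
      · show M.gens = (T.contract X).gens \ ((T.contract X).gens \ M.gens)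
        rw [Finset.sdiff_sdiff_self_left]
        exact (Finset.inter_eq_right.mpr hsub').symm
    exact Relation.ReflTransGen.tail
      (Relation.ReflTransGen.single ⟨X, hX, Or.inr rfl⟩)
      ⟨(T.contract X).gens \ M.gens, Finset.sdiff_subset, Or.inl hM⟩

end GEL


/-- The Boolean decomposition of the minor poset: for each `ℓ ∈ L`, the minors
with minimal element `ℓ` form exactly the interval `[(ℓ,∅), (L,G)/ℓ]` of the
minor poset (so the minors decompose as the disjoint union over `ℓ ∈ L` of
these classes), and each such class is isomorphic to a Boolean algebra of rank
`|{g ∨ ℓ : g ∈ G} \ {ℓ}|`. -/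
theorem minorPoset_boolean_decomposition {L : Type*} [Lattice L] [OrderBot L]
    [DecidableEq L] (T : GEL L) (hcar : ∀ ℓ : L, ℓ ∈ T.carrier) :
    (∀ (ℓ : L) (M : GEL L),
      (T.Minor M ∧ M.z = ℓ) ↔
        ((T.contractEl ℓ).Minor M ∧
          M.Minor ⟨ℓ, ∅, fun g hg => absurd hg (Finset.notMem_empty g)⟩)) ∧
    (∀ ℓ : L,
      ∃ e : {M : GEL L // T.Minor M ∧ M.z = ℓ} ≃
          Finset (Fin (((T.gens.image fun g => g ⊔ ℓ).erase ℓ).card)),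
        ∀ A B : {M : GEL L // T.Minor M ∧ M.z = ℓ},
          B.1.Minor A.1 ↔ e A ⊆ e B) := by
  classical
  have hcar' : ∀ ℓ : L, ∃ X ⊆ T.gens, X.sup id ⊔ T.z = ℓ := by
    intro ℓ
    obtain ⟨X, hX, hXℓ⟩ := Finset.mem_image.mp (hcar ℓ)
    exact ⟨X, Finset.mem_powerset.mp hX, hXℓ⟩
  have hzc : ∀ ℓ : L, (T.contractEl ℓ).z = ℓ := by
    intro ℓ
    obtain ⟨X, hX, hXℓ⟩ := hcar' ℓ
    show (T.gens.filter fun g => g ≤ ℓ).sup id ⊔ T.z = ℓ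
    have hzℓ : T.z ≤ ℓ := le_trans le_sup_right hXℓ.le
    apply le_antisymm
    · exact sup_le (Finset.sup_le fun g hg => (Finset.mem_filter.mp hg).2) hzℓ
    · have hXf : X ⊆ T.gens.filter fun g => g ≤ ℓ := by
        intro x hx
        exact Finset.mem_filter.mpr ⟨hX hx,
          le_trans (Finset.le_sup (f := id) hx) (le_trans le_sup_left hXℓ.le)⟩
      calc ℓ = X.sup id ⊔ T.z := hXℓ.symm
        _ ≤ _ := sup_le_sup_right (Finset.sup_mono hXf) _
  have hgc : ∀ ℓ : L,
      (T.contractEl ℓ).gens = (T.gens.image fun g => g ⊔ ℓ).erase ℓ := by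
    intro ℓ
    have h := hzc ℓ
    show (T.gens.image fun g => g ⊔ (T.contractEl ℓ).z).erase
      ((T.contractEl ℓ).z) = _
    rw [h]
  have hEmem : ∀ ℓ h : L, h ∈ (T.gens.image fun g => g ⊔ ℓ).erase ℓ →
      ℓ < h ∧ h ⊔ ℓ = h := by
    intro ℓ h hh
    obtain ⟨hne, hh'⟩ := Finset.mem_erase.mp hh
    obtain ⟨g, hg, rfl⟩ := Finset.mem_image.mp hh'
    exact ⟨lt_of_le_of_ne le_sup_right (Ne.symm hne), sup_eq_left.mpr le_sup_right⟩
  constructor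
  · intro ℓ M
    constructor
    · rintro ⟨hTM, rfl⟩
      obtain ⟨-, hsub⟩ := (GEL.minor_iff T M).mp hTM
      constructor
      · refine (GEL.minor_iff _ _).mpr ⟨⟨∅, Finset.empty_subset _, by simp [hzc]⟩, ?_⟩
        rw [hgc]
        intro h hh
        have hhE := hsub hh
        obtain ⟨hlt, hsup⟩ := hEmem _ _ hhE
        exact Finset.mem_erase.mpr ⟨hlt.ne', Finset.mem_image.mpr ⟨h, hhE, hsup⟩⟩
      · exact (GEL.minor_iff _ _).mpr
          ⟨⟨∅, Finset.empty_subset _, by simp⟩, Finset.empty_subset _⟩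
    · rintro ⟨h1, h2⟩
      obtain ⟨⟨X, hX, hXz⟩, hsub⟩ := (GEL.minor_iff _ _).mp h1
      obtain ⟨⟨Y, hY, hYz⟩, -⟩ := (GEL.minor_iff _ _).mp h2
      have hz1 : ℓ ≤ M.z := by
        rw [hzc] at hXz
        exact le_trans le_sup_right hXz.le
      have hz2 : M.z ≤ ℓ := le_trans le_sup_right hYz.le
      have hzℓ : M.z = ℓ := le_antisymm hz2 hz1
      refine ⟨(GEL.minor_iff _ _).mpr ⟨?_, ?_⟩, hzℓ⟩
      · rw [hzℓ]; exact hcar' ℓ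
      · rw [hgc] at hsub
        intro h hh
        have hh' := hsub hh
        rw [hzℓ] at hh'
        rw [hzℓ]
        obtain ⟨hne, hh''⟩ := Finset.mem_erase.mp hh'
        obtain ⟨e, he, rfl⟩ := Finset.mem_image.mp hh''
        obtain ⟨hlt_e, hsup_e⟩ := hEmem _ _ he
        rw [hsup_e]
        exact he
  · intro ℓ
    set E := (T.gens.image fun g => g ⊔ ℓ).erase ℓ with hE
    let e0 : {x // x ∈ E} ≃ Fin E.card := E.equivFin
    have hgens : ∀ M : {M : GEL L // T.Minor M ∧ M.z = ℓ}, M.1.gens ⊆ E := by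
      intro M
      have h := ((GEL.minor_iff T M.1).mp M.2.1).2
      rw [M.2.2] at h
      exact h
    let f : {M : GEL L // T.Minor M ∧ M.z = ℓ} → Finset (Fin E.card) :=
      fun M => Finset.univ.filter fun i => (e0.symm i : L) ∈ M.1.gens
    have hmono : ∀ A B : {M : GEL L // T.Minor M ∧ M.z = ℓ},
        f A ⊆ f B ↔ A.1.gens ⊆ B.1.gens := by
      intro A B
      constructor
      · intro hf h hh
        have hhE : h ∈ E := hgens A hh
        have h1 : e0 ⟨h, hhE⟩ ∈ f A := by
          simp only [f, Finset.mem_filter, Finset.mem_univ, true_and,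
            Equiv.symm_apply_apply]
          exact hh
        have h2 := hf h1
        simpa only [f, Finset.mem_filter, Finset.mem_univ, true_and,
          Equiv.symm_apply_apply] using h2
      · intro hAB i hi
        simp only [f, Finset.mem_filter, Finset.mem_univ, true_and] at hi ⊢
        exact hAB hi
    have hinj : Function.Injective f := by
      intro A B hAB
      have h1 : A.1.gens ⊆ B.1.gens := (hmono A B).mp (le_of_eq hAB)
      have h2 : B.1.gens ⊆ A.1.gens := (hmono B A).mp (le_of_eq hAB.symm)
      exact Subtype.ext (GEL.ext' (A.2.2.trans B.2.2.symm)
        (Finset.Subset.antisymm h1 h2))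
    have hsurj : Function.Surjective f := by
      intro F
      have hsubE : ∀ x ∈ F.image (fun i => (e0.symm i : L)), x ∈ E := by
        intro x hx
        obtain ⟨i, -, rfl⟩ := Finset.mem_image.mp hx
        exact (e0.symm i).2
      refine ⟨⟨⟨ℓ, F.image (fun i => (e0.symm i : L)), ?_⟩, ?_, rfl⟩, ?_⟩
      · intro g hg
        exact (hEmem ℓ g (hsubE g hg)).1
      · refine (GEL.minor_iff _ _).mpr ⟨hcar' ℓ, ?_⟩
        intro x hx
        exact hsubE x hx
      · ext i
        simp only [f, Finset.mem_filter, Finset.mem_univ, true_and,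
          Finset.mem_image]
        constructor
        · rintro ⟨j, hj, hji⟩
          have hji' : j = i := e0.symm.injective (Subtype.ext hji)
          exact hji' ▸ hj
        · intro hi
          exact ⟨i, hi, rfl⟩
    refine ⟨Equiv.ofBijective f (show Function.Bijective f from ⟨hinj, hsurj⟩), ?_⟩
    intro A B
    rw [Equiv.ofBijective_apply, Equiv.ofBijective_apply, hmono]
    constructor
    · intro hBA
      have hsub := ((GEL.minor_iff _ _).mp hBA).2
      intro x hx
      have hx' := hsub hx
      rw [A.2.2] at hx'
      obtain ⟨-, hx''⟩ := Finset.mem_erase.mp hx'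
      obtain ⟨b, hb, rfl⟩ := Finset.mem_image.mp hx''
      have hbE := hgens B hb
      rw [(hEmem ℓ b hbE).2]
      exact hb
    · intro h
      refine (GEL.minor_iff _ _).mpr
        ⟨⟨∅, Finset.empty_subset _, by simp [A.2.2, B.2.2]⟩, ?_⟩
      intro x hx
      have hxB := h hx
      have hxE := hgens B hxB
      have hx2 := hEmem ℓ x hxE
      rw [A.2.2]
      exact Finset.mem_erase.mpr ⟨hx2.1.ne', Finset.mem_image.mpr ⟨x, hxB, hx2.2⟩⟩
end

section
/- If (L,G) is a generator enriched lattice with n generators and no parallels, then there exists a strong surjection from (L,G) onto the chain of length n with its minimal generating set. -/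
open Finset

/-- If `(L,G)` is a generator enriched lattice with `n` generators and no
parallels, then there is a strong surjection from `(L,G)` onto the chain of
length `n` with its minimal generating set `{1, …, n}`: a join-preserving map
`f` with `f(G ∪ {0̂}) = {0, 1, …, n}`. -/
theorem noParallels_strong_surjection_onto_chain {L : Type*} [Lattice L]
    [OrderBot L] [DecidableEq L] (T : GEL L)
    (hcar : ∀ ℓ : L, ℓ ∈ T.carrier) (hnp : ¬ T.HasParallel) :
    ∃ f : L → Fin (T.gens.card + 1),
      (∀ a b : L, f (a ⊔ b) = f a ⊔ f b) ∧
      (insert (⊥ : L) T.gens).image f = Finset.univ := by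
  classical
  set n := T.gens.card with hn
  have hz : T.z = ⊥ := by
    have h0 := hcar ⊥
    simp only [GEL.carrier, Finset.mem_image, Finset.mem_powerset] at h0
    obtain ⟨X, -, hX⟩ := h0
    exact le_bot_iff.mp (le_of_le_of_eq le_sup_right hX)
  have hbot : ∀ g ∈ T.gens, ¬ g ≤ (⊥ : L) := by
    intro g hg hle
    have := T.lt_gens g hg
    rw [hz] at this
    exact this.ne' (le_bot_iff.mp hle)
  have key : ∀ ℓ : L, (∃ g ∈ T.gens, ¬ g ≤ ℓ) →
      ∃ g, g ∈ T.gens ∧ ¬ g ≤ ℓ ∧ ∀ h ∈ T.gens, h ≤ g ⊔ ℓ → h ≤ ℓ ∨ h = g := by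
    intro ℓ hex
    obtain ⟨m, hm, hmin⟩ := Finset.exists_minimal (s :=
      (T.gens.filter (fun g => ¬ g ≤ ℓ)).image (fun g => g ⊔ ℓ)) (by
        obtain ⟨g, hg, hgl⟩ := hex
        exact ⟨g ⊔ ℓ, Finset.mem_image_of_mem _ (Finset.mem_filter.mpr ⟨hg, hgl⟩)⟩)
    obtain ⟨g, hgS, rfl⟩ := Finset.mem_image.mp hm
    obtain ⟨hg, hgl⟩ := Finset.mem_filter.mp hgS
    refine ⟨g, hg, hgl, fun h hh hle => ?_⟩
    by_cases hhl : h ≤ ℓ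
    · exact Or.inl hhl
    right
    by_contra hne
    have h1 : h ⊔ ℓ ≤ g ⊔ ℓ := sup_le hle le_sup_right
    have h2 : ¬ (h ⊔ ℓ < g ⊔ ℓ) := fun hlt => hlt.ne (le_antisymm hlt.le (hmin (Finset.mem_image_of_mem _
      (Finset.mem_filter.mpr ⟨hh, hhl⟩)) hlt.le))
    have heq : h ⊔ ℓ = g ⊔ ℓ := h1.lt_or_eq.resolve_left h2
    exact hnp ⟨ℓ, hcar ℓ, g, hg, h, hh, Ne.symm hne, heq.symm,
      fun e => hgl (sup_eq_right.mp e)⟩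
  choose gf hgf1 hgf2 hgf3 using key
  set c : ℕ → L := fun i => Nat.rec ⊥ (fun _ ℓ =>
    if h : ∃ g ∈ T.gens, ¬ g ≤ ℓ then gf ℓ h ⊔ ℓ else ℓ) i with hc
  have hc0 : c 0 = ⊥ := rfl
  have hcs : ∀ i, c (i+1) =
      if h : ∃ g ∈ T.gens, ¬ g ≤ c i then gf (c i) h ⊔ c i else c i := fun i => rfl
  have hmono1 : ∀ i, c i ≤ c (i+1) := by
    intro i
    rw [hcs]
    split
    · exact le_sup_right
    · exact le_rfl
  have hmono : Monotone c := monotone_nat_of_le_succ hmono1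
  have hd : ∀ i, (T.gens.filter fun g => ¬ g ≤ c i).card = n - i := by
    intro i
    induction i with
    | zero =>
      rw [Nat.sub_zero, hn]
      exact congrArg Finset.card (Finset.filter_true_of_mem (by
        intro g hg
        rw [hc0]
        exact hbot g hg))
    | succ i ih =>
      by_cases h : ∃ g ∈ T.gens, ¬ g ≤ c i
      · have hstep : c (i+1) = gf (c i) h ⊔ c i := by rw [hcs, dif_pos h]
        have hfe : (T.gens.filter fun g => ¬ g ≤ c (i+1)) =
            (T.gens.filter fun g => ¬ g ≤ c i).erase (gf (c i) h) := by
          ext x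
          simp only [Finset.mem_filter, Finset.mem_erase]
          constructor
          · rintro ⟨hx, hxle⟩
            refine ⟨fun hxe => hxle ?_, hx, fun hxc => hxle ((hmono1 i).trans' hxc)⟩
            rw [hstep, hxe]
            exact le_sup_left
          · rintro ⟨hne, hx, hxle⟩
            refine ⟨hx, fun hxc => ?_⟩
            rw [hstep] at hxc
            rcases hgf3 (c i) h x hx hxc with h' | h'
            · exact hxle h'
            · exact hne h'
        rw [hfe, Finset.card_erase_of_mem
          (Finset.mem_filter.mpr ⟨hgf1 (c i) h, hgf2 (c i) h⟩), ih, Nat.sub_sub]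
      · have hstep : c (i+1) = c i := by rw [hcs, dif_neg h]
        push_neg at h
        have h0 : (T.gens.filter fun g => ¬ g ≤ c i) = ∅ :=
          Finset.filter_eq_empty_iff.mpr (fun {x} hx => not_not_intro (h x hx))
        rw [hstep, h0, Finset.card_empty]
        rw [h0, Finset.card_empty] at ih
        omega
  have hgall : ∀ g ∈ T.gens, g ≤ c n := by
    intro g hg
    by_contra hgl
    have := hd n
    rw [Nat.sub_self, Finset.card_eq_zero] at this
    exact absurd (Finset.mem_filter.mpr ⟨hg, hgl⟩) (this ▸ Finset.notMem_empty g)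
  have htop : ∀ ℓ : L, ℓ ≤ c n := by
    intro ℓ
    have hℓ := hcar ℓ
    simp only [GEL.carrier, Finset.mem_image, Finset.mem_powerset] at hℓ
    obtain ⟨X, hX, rfl⟩ := hℓ
    rw [hz]
    exact sup_le (Finset.sup_le fun g hg => hgall g (hX hg)) bot_le
  have hfind : ∀ ℓ : L, ∃ i, ℓ ≤ c i := fun ℓ => ⟨n, htop ℓ⟩
  set F : L → ℕ := fun ℓ => Nat.find (hfind ℓ) with hF
  have hFle : ∀ ℓ, F ℓ ≤ n := fun ℓ => Nat.find_le (htop ℓ)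
  have hFspec : ∀ ℓ, ℓ ≤ c (F ℓ) := fun ℓ => Nat.find_spec (hfind ℓ)
  have hFmono : ∀ a b : L, a ≤ b → F a ≤ F b := fun a b hab =>
    Nat.find_mono (fun i hi => hab.trans hi)
  have hjoin : ∀ a b : L, F (a ⊔ b) = max (F a) (F b) := by
    intro a b
    apply le_antisymm
    · apply Nat.find_le
      exact sup_le ((hFspec a).trans (hmono (le_max_left _ _)))
        ((hFspec b).trans (hmono (le_max_right _ _)))
    · exact max_le (hFmono _ _ le_sup_left) (hFmono _ _ le_sup_right)
  refine ⟨fun ℓ => ⟨F ℓ, Nat.lt_succ_of_le (hFle ℓ)⟩, ?_, ?_⟩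
  · intro a b
    apply Fin.ext
    show F (a ⊔ b) = max (F a) (F b)
    exact hjoin a b
  · apply Finset.eq_univ_iff_forall.mpr
    intro i
    rw [Finset.mem_image]
    rcases Nat.eq_zero_or_pos i.val with h0 | hpos
    · refine ⟨⊥, Finset.mem_insert_self _ _, ?_⟩
      apply Fin.ext
      show F ⊥ = i.val
      rw [h0]
      exact Nat.find_eq_zero (hfind ⊥) |>.mpr (by rw [hc0])
    · set j := i.val - 1 with hj
      have hjn : j < n := by
        have := i.isLt
        omega
      have hex : ∃ g ∈ T.gens, ¬ g ≤ c j := by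
        have := hd j
        have hpos' : 0 < (T.gens.filter fun g => ¬ g ≤ c j).card := by omega
        obtain ⟨g, hg⟩ := Finset.card_pos.mp hpos'
        obtain ⟨hg1, hg2⟩ := Finset.mem_filter.mp hg
        exact ⟨g, hg1, hg2⟩
      refine ⟨gf (c j) hex, Finset.mem_insert_of_mem (hgf1 (c j) hex), ?_⟩
      apply Fin.ext
      show F (gf (c j) hex) = i.val
      have hle : gf (c j) hex ≤ c (j+1) := by
        rw [hcs, dif_pos hex]
        exact le_sup_left
      have h1 : F (gf (c j) hex) ≤ j + 1 := Nat.find_le hle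
      have h2 : j + 1 ≤ F (gf (c j) hex) := by
        rw [Nat.le_find_iff]
        intro m hm hmle
        exact hgf2 (c j) hex (hmle.trans (hmono (by omega)))
      omega
end
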